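/- arXiv:2102.07626 — 6 statements merged into one kernel-verified Lean document; each statement's English description precedes it below -/
import Mathlib

section
/- Let n ≥ 1, λ ∈ (0,1), and let f : {0,1}³ → {0,1} be an even local rule, i.e. f(0,0,0) = 0. For the NDECA transition matrix P on X_n, every initial configuration y ∈ X_n with y ≠ 0, and every t ≥ 1, the probability of not being in the all-zero configuration at time t satisfies Σ_{x ∈ X_n, x ≠ 0} (Pᵗ)(y,x) ≤ (1 − (1−λ)ⁿ)ᵗ ≤ exp(−t·(1−λ)ⁿ). -/
/-!
The all-zero configuration is absorbing for an even rule, and from any configuration every cell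
independently stays `0` with probability at least `1 - λ`, so each step hits `0` with probability
at least `q = (1 - λ)ⁿ`. Hence the mass off `0` shrinks by a factor `1 - q` per step, which holds
for any row-stochastic matrix with an absorbing state that every row reaches with weight `≥ q`.
-/

/-- NDECA transition matrix on the ring `ℤ/nℤ`:
`P(x,y) = Π_i [yᵢ·λ·f(x_{i-1},x_i,x_{i+1}) + (1-yᵢ)·(1-λ·f(x_{i-1},x_i,x_{i+1}))]`. -/
noncomputable def ndecaMatrix (n : ℕ) [NeZero n] (f : Bool → Bool → Bool → Bool) (l : ℝ) :
    Matrix (ZMod n → Bool) (ZMod n → Bool) ℝ :=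
  fun x y => ∏ i : ZMod n,
    (((y i).toNat : ℝ) * (l * ((f (x (i - 1)) (x i) (x (i + 1))).toNat : ℝ)) +
      (1 - ((y i).toNat : ℝ)) * (1 - l * ((f (x (i - 1)) (x i) (x (i + 1))).toNat : ℝ)))

open Finset

namespace Matrix

variable {R ι : Type*} [Field R] [LinearOrder R] [IsStrictOrderedRing R]
  [Fintype ι] [DecidableEq ι] {M P : Matrix ι ι R} {a : ι} {q : R}

lemma sum_erase_eq_one_sub_of_mem_rowStochastic (hM : M ∈ rowStochastic R ι) (i a : ι) :
    ∑ j ∈ univ.erase a, M i j = 1 - M i a := by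
  rw [← sum_row_of_mem_rowStochastic hM i, ← add_sum_erase _ _ (mem_univ a)]
  ring

lemma apply_add_mul_one_sub_le_mul_apply (hM : M ∈ rowStochastic R ι) (haa : P a a = 1)
    (hq : ∀ z, q ≤ P z a) (y : ι) :
    M y a + q * (1 - M y a) ≤ (M * P) y a := by
  have hoff : q * (1 - M y a) ≤ ∑ z ∈ univ.erase a, M y z * P z a := by
    rw [← sum_erase_eq_one_sub_of_mem_rowStochastic hM, mul_sum]
    exact sum_le_sum fun z _ => by
      rw [mul_comm]
      exact mul_le_mul_of_nonneg_left (hq z) (nonneg_of_mem_rowStochastic hM)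
  rw [mul_apply, ← add_sum_erase _ _ (mem_univ a), haa, mul_one]
  exact add_le_add_right hoff _

lemma one_sub_pow_apply_le (hP : P ∈ rowStochastic R ι) (haa : P a a = 1)
    (hq : ∀ z, q ≤ P z a) (y : ι) (t : ℕ) :
    1 - (P ^ t) y a ≤ (1 - q) ^ t := by
  induction t with
  | zero => simpa using nonneg_of_mem_rowStochastic (pow_mem hP 0) (i := y) (j := a)
  | succ t ih =>
    have hstep := apply_add_mul_one_sub_le_mul_apply (pow_mem hP t) haa hq y
    have hq1 : 0 ≤ 1 - q := sub_nonneg.2 (haa ▸ hq a)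
    calc 1 - (P ^ (t + 1)) y a ≤ (1 - q) * (1 - (P ^ t) y a) := by
          rw [pow_succ]; linarith
      _ ≤ (1 - q) ^ (t + 1) := by
          rw [pow_succ']; exact mul_le_mul_of_nonneg_left ih hq1

end Matrix

lemma Real.one_sub_pow_le_exp_neg_mul {q : ℝ} (hq : q ≤ 1) (t : ℕ) :
    (1 - q) ^ t ≤ Real.exp (-(t : ℝ) * q) := by
  rw [neg_mul, ← mul_neg, Real.exp_nat_mul]
  exact pow_le_pow_left₀ (sub_nonneg.2 hq) (Real.one_sub_le_exp_neg q) t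

section ndeca

variable {n : ℕ} [NeZero n] {f : Bool → Bool → Bool → Bool} {l : ℝ}

lemma ndecaMatrix_mem_rowStochastic (hl0 : 0 ≤ l) (hl1 : l ≤ 1) :
    ndecaMatrix n f l ∈ Matrix.rowStochastic ℝ (ZMod n → Bool) := by
  refine Matrix.mem_rowStochastic_iff_sum.2 ⟨fun x z => prod_nonneg fun i _ => ?_, fun x => ?_⟩
  · cases z i <;> cases f (x (i - 1)) (x i) (x (i + 1)) <;> simp [hl0, hl1]
  · unfold ndecaMatrix
    rw [← Fintype.prod_sum (R := ℝ) fun i (b : Bool) =>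
      (b.toNat : ℝ) * (l * (f (x (i - 1)) (x i) (x (i + 1))).toNat) +
        (1 - b.toNat) * (1 - l * (f (x (i - 1)) (x i) (x (i + 1))).toNat)]
    exact prod_eq_one fun _ _ => by simp

lemma ndecaMatrix_apply_false_false (hf : f false false false = false) :
    ndecaMatrix n f l (fun _ => false) (fun _ => false) = 1 := by
  simp [ndecaMatrix, hf]

lemma one_sub_pow_le_ndecaMatrix_apply_false (hl0 : 0 ≤ l) (hl1 : l ≤ 1) (x : ZMod n → Bool) :
    (1 - l) ^ n ≤ ndecaMatrix n f l x (fun _ => false) := by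
  calc (1 - l) ^ n = ∏ _i : ZMod n, (1 - l) := by rw [prod_const, card_univ, ZMod.card]
    _ ≤ _ := prod_le_prod (fun _ _ => sub_nonneg.2 hl1) fun i _ => by
      cases f (x (i - 1)) (x i) (x (i + 1)) <;> simp [hl0]

end ndeca

theorem stmt5_general (n : ℕ) [NeZero n] (f : Bool → Bool → Bool → Bool)
    (hf : f false false false = false)
    (l : ℝ) (hl : l ∈ Set.Ioo (0:ℝ) 1)
    (y : ZMod n → Bool)
    (t : ℕ) :
    (∑ x ∈ Finset.univ.filter (fun x : ZMod n → Bool => x ≠ fun _ => false),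
        (ndecaMatrix n f l ^ t) y x) ≤ (1 - (1 - l) ^ n) ^ t ∧
    (1 - (1 - l) ^ n) ^ t ≤ Real.exp (-(t : ℝ) * (1 - l) ^ n) := by
  obtain ⟨hl0, hl1⟩ := hl
  have hP := ndecaMatrix_mem_rowStochastic (n := n) (f := f) hl0.le hl1.le
  refine ⟨?_, Real.one_sub_pow_le_exp_neg_mul (pow_le_one₀ (by linarith) (by linarith)) t⟩
  rw [filter_ne', Matrix.sum_erase_eq_one_sub_of_mem_rowStochastic (pow_mem hP t)]
  exact Matrix.one_sub_pow_apply_le hP (ndecaMatrix_apply_false_false hf)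
    (one_sub_pow_le_ndecaMatrix_apply_false hl0.le hl1.le) y t

theorem stmt5 (n : ℕ) [NeZero n] (f : Bool → Bool → Bool → Bool)
    (hf : f false false false = false)
    (l : ℝ) (hl : l ∈ Set.Ioo (0:ℝ) 1)
    (y : ZMod n → Bool) (hy : y ≠ fun _ => false)
    (t : ℕ) (ht : 1 ≤ t) :
    (∑ x ∈ Finset.univ.filter (fun x : ZMod n → Bool => x ≠ fun _ => false),
        (ndecaMatrix n f l ^ t) y x) ≤ (1 - (1 - l) ^ n) ^ t ∧
    (1 - (1 - l) ^ n) ^ t ≤ Real.exp (-(t : ℝ) * (1 - l) ^ n) :=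
  stmt5_general n f hf l hl y t
end

section
/- Let λ ∈ (0,1) and let α be a real number with α·(1−λ) > 1. Then the sequence (1 − (1−λ)ⁿ)^(αⁿ), where the outer exponent αⁿ is taken as a real power, tends to 0 as n → ∞. -/
/-! Since `1 - x ≤ exp (-x)`, we get `(1 - (1-λ)ⁿ)^(αⁿ) ≤ exp (-(α (1-λ))ⁿ)`, and the right-hand
side tends to `0` because `α (1-λ) > 1`. -/

open Filter Real Topology

lemma Real.one_sub_rpow_le_exp_neg_mul {x a : ℝ} (hx : x ≤ 1) (ha : 0 ≤ a) :
    (1 - x) ^ a ≤ exp (-(a * x)) :=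
  calc (1 - x) ^ a ≤ exp (-x) ^ a := rpow_le_rpow (by linarith) (one_sub_le_exp_neg x) ha
    _ = exp (-(a * x)) := by rw [← exp_mul]; ring_nf

lemma tendsto_one_sub_rpow_nhds_zero {ι : Type*} {l : Filter ι} {x a : ι → ℝ}
    (hx : ∀ᶠ i in l, x i ≤ 1) (ha : ∀ᶠ i in l, 0 ≤ a i)
    (hax : Tendsto (fun i => a i * x i) l atTop) :
    Tendsto (fun i => (1 - x i) ^ a i) l (𝓝 0) := by
  have hexp : Tendsto (fun i => exp (-(a i * x i))) l (𝓝 0) :=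
    tendsto_exp_atBot.comp (tendsto_neg_atTop_atBot.comp hax)
  refine tendsto_of_tendsto_of_tendsto_of_le_of_le' tendsto_const_nhds hexp ?_ ?_
  · filter_upwards [hx] with i hxi using rpow_nonneg (by linarith) _
  · filter_upwards [hx, ha] with i hxi hai using one_sub_rpow_le_exp_neg_mul hxi hai

theorem stmt7 (l α : ℝ) (hl : l ∈ Set.Ioo (0:ℝ) 1) (hα : α * (1 - l) > 1) :
    Filter.Tendsto (fun n : ℕ => Real.rpow (1 - (1 - l) ^ n) (α ^ n))
      Filter.atTop (nhds 0) := by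
  obtain ⟨hl0, hl1⟩ := hl
  have hq0 : 0 ≤ 1 - l := by linarith
  have hα0 : 0 ≤ α := by nlinarith
  refine tendsto_one_sub_rpow_nhds_zero (x := fun n => (1 - l) ^ n) (a := fun n => α ^ n)
    (Eventually.of_forall fun n => pow_le_one₀ hq0 (by linarith))
    (Eventually.of_forall fun n => pow_nonneg hα0 n) ?_
  simpa only [← mul_pow] using tendsto_pow_atTop_atTop_of_one_lt hα
end

section
/- Let f : {0,1}³ → {0,1} be an elementary cellular automaton local rule with f(0,0,0) = 1 (odd rule) and let λ ∈ (0,1). Then the mean-field fixed-point equation a = λ·Σ_{(z₁,z₂,z₃)∈{0,1}³ : f(z₁,z₂,z₃)=1} Π_{k=1}^{3} (z_k·a + (1−z_k)·(1−a)) has exactly one solution a in the interval [0,1]. -/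
/-- Real value of a binary cell. -/
def bitR (b : Bool) : ℝ := (b.toNat : ℝ)

/-- The mean-field sum `Σ_{f(z)=1} Π_{k=1}^{3} (z_k·a + (1-z_k)·(1-a))`. -/
noncomputable def mfSum (f : Bool → Bool → Bool → Bool) (a : ℝ) : ℝ :=
  ∑ z : Bool × Bool × Bool,
    if f z.1 z.2.1 z.2.2 = true then
      (bitR z.1 * a + (1 - bitR z.1) * (1 - a)) *
        ((bitR z.2.1 * a + (1 - bitR z.2.1) * (1 - a)) *
          (bitR z.2.2 * a + (1 - bitR z.2.2) * (1 - a)))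
    else 0

/-!
With `S = mfSum f` and `G a = λ S a - a`, we have `G 0 = λ > 0` (the rule is odd) and
`G 1 = λ f(1,1,1) - 1 < 0`, so `G` has a zero in `[0, 1]`. At any zero `a` we have `a < S a`,
and a direct estimate of the cubic `S` shows that then `S' a ≤ 1`, hence `G' a < 0`. A
differentiable function whose zeros are all crossed downwards has at most one zero on an interval.
-/

open Set Filter Topology

theorem Set.OrdConnected.subsingleton_zeros_of_deriv_neg {s : Set ℝ} (hs : s.OrdConnected)
    {G G' : ℝ → ℝ} (hG : ∀ x ∈ s, HasDerivAt G (G' x) x)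
    (hneg : ∀ x ∈ s, G x = 0 → G' x < 0) : {x ∈ s | G x = 0}.Subsingleton := by
  suffices ∀ x ∈ s, ∀ y ∈ s, G x = 0 → G y = 0 → ¬x < y from fun x hx y hy =>
    le_antisymm (not_lt.1 (this y hy.1 x hx.1 hy.2 hx.2)) (not_lt.1 (this x hx.1 y hy.1 hx.2 hy.2))
  intro x hx y hy hGx hGy hxy
  have hsub : Icc x y ⊆ s := hs.out hx hy
  have hle : ∀ t ∈ Icc x y, G t ≤ 0 :=
    image_le_of_deriv_right_lt_deriv_boundary'
      (fun t ht => (hG t (hsub ht)).continuousAt.continuousWithinAt)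
      (fun t ht => (hG t (hsub (Ico_subset_Icc_self ht))).hasDerivWithinAt) hGx.le
      continuousOn_const (fun _ _ => hasDerivWithinAt_const _ _ _)
      (fun t ht hGt => hneg t (hsub (Ico_subset_Icc_self ht)) hGt)
  have hpos : ∀ᶠ t in 𝓝[<] y, 0 < G t := by
    have hsign := eventually_nhdsWithin_sign_eq_of_deriv_neg
      ((hG y hy).deriv ▸ hneg y hy hGy) hGy
    filter_upwards [nhdsWithin_le_nhds hsign, self_mem_nhdsWithin] with t ht (htlt : t < y)
    rwa [sign_pos (sub_pos.2 htlt), sign_eq_one_iff] at ht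
  obtain ⟨t, hGt, htxy⟩ := (hpos.and (Ioo_mem_nhdsLT hxy)).exists
  exact (hle t (Ioo_subset_Icc_self htxy)).not_gt hGt

/-- The mean-field sum of a rule with `f 0 0 0 = 1` having `n₁`, `n₂`, `n₃` active
neighbourhoods with one, two and three ones. -/
def oddMeanField (n₁ n₂ n₃ : ℕ) (x : ℝ) : ℝ :=
  (1 - x) ^ 3 + n₁ * (x * (1 - x) ^ 2) + n₂ * (x ^ 2 * (1 - x)) + n₃ * x ^ 3

def oddMeanFieldDeriv (n₁ n₂ n₃ : ℕ) (x : ℝ) : ℝ :=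
  -3 * (1 - x) ^ 2 + n₁ * ((1 - x) ^ 2 - 2 * x * (1 - x)) + n₂ * (2 * x * (1 - x) - x ^ 2)
    + 3 * n₃ * x ^ 2

theorem hasDerivAt_oddMeanField (n₁ n₂ n₃ : ℕ) (x : ℝ) :
    HasDerivAt (oddMeanField n₁ n₂ n₃) (oddMeanFieldDeriv n₁ n₂ n₃ x) x := by
  have hid := hasDerivAt_id' x
  have hsub := hid.const_sub 1
  have h := ((((hsub.pow 3).add ((hid.mul (hsub.pow 2)).const_mul (n₁ : ℝ))).add
    (((hid.pow 2).mul hsub).const_mul (n₂ : ℝ))).add ((hid.pow 3).const_mul (n₃ : ℝ)))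
  exact h.congr_deriv (by simp only [oddMeanFieldDeriv, Pi.pow_apply]; ring)

theorem oddMeanFieldDeriv_le_one {n₁ n₂ n₃ : ℕ} (hn₁ : n₁ ≤ 3) (hn₂ : n₂ ≤ 3) (hn₃ : n₃ ≤ 1)
    {x : ℝ} (hx : x ∈ Ioo 0 1) (hlt : x < oddMeanField n₁ n₂ n₃ x) :
    oddMeanFieldDeriv n₁ n₂ n₃ x ≤ 1 := by
  -- `hlt` is needed: for `S = (1 - x) ^ 3 + x ^ 3` the slope tends to `3` as `x → 1`.
  obtain ⟨hx0, hx1⟩ := hx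
  unfold oddMeanField at hlt
  unfold oddMeanFieldDeriv
  interval_cases n₁ <;> interval_cases n₂ <;> interval_cases n₃ <;> push_cast at hlt ⊢ <;>
    nlinarith [sq_nonneg (3 * x - 1), sq_nonneg (3 * x - 2), sq_nonneg (2 * x - 1),
      mul_pos hx0 (sub_pos.2 hx1)]

theorem existsUnique_eq_mul_oddMeanField {n₁ n₂ n₃ : ℕ} (hn₁ : n₁ ≤ 3) (hn₂ : n₂ ≤ 3)
    (hn₃ : n₃ ≤ 1) {l : ℝ} (hl : l ∈ Ioo 0 1) :
    ∃! a : ℝ, a ∈ Icc 0 1 ∧ a = l * oddMeanField n₁ n₂ n₃ a := by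
  obtain ⟨hl0, hl1⟩ := hl
  set S := oddMeanField n₁ n₂ n₃
  have hn₃' : (n₃ : ℝ) ≤ 1 := by exact_mod_cast hn₃
  have hG0 : l * S 0 - 0 = l := by simp [S, oddMeanField]
  have hG1 : l * S 1 - 1 = l * n₃ - 1 := by simp [S, oddMeanField]
  have hG1_neg : l * S 1 - 1 < 0 := by rw [hG1]; nlinarith
  have hderiv : ∀ x, HasDerivAt (fun a => l * S a - a) (l * oddMeanFieldDeriv n₁ n₂ n₃ x - 1) x :=
    fun x => ((hasDerivAt_oddMeanField n₁ n₂ n₃ x).const_mul l).sub (hasDerivAt_id' x)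
  have hcross : ∀ x ∈ Icc (0 : ℝ) 1, l * S x - x = 0 → l * oddMeanFieldDeriv n₁ n₂ n₃ x - 1 < 0 := by
    intro x hx hGx
    have hx0 : x ≠ 0 := by rintro rfl; linarith
    have hx1 : x ≠ 1 := by rintro rfl; linarith
    have hxS : x < S x := by nlinarith [hx.1.lt_of_ne' hx0]
    have hD := oddMeanFieldDeriv_le_one hn₁ hn₂ hn₃
      ⟨hx.1.lt_of_ne' hx0, hx.2.lt_of_ne hx1⟩ hxS
    nlinarith [mul_le_mul_of_nonneg_left hD hl0.le]
  obtain ⟨c, hc, hGc⟩ := intermediate_value_Icc' zero_le_one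
    (fun x _ => (hderiv x).continuousAt.continuousWithinAt)
    (show (0 : ℝ) ∈ Icc (l * S 1 - 1) (l * S 0 - 0) from ⟨hG1_neg.le, by linarith⟩)
  have hzeros := ordConnected_Icc.subsingleton_zeros_of_deriv_neg (fun x _ => hderiv x) hcross
  exact ⟨c, ⟨hc, by linarith [hGc]⟩, fun y ⟨hy, hyS⟩ => hzeros ⟨hy, by linarith⟩ ⟨hc, hGc⟩⟩

def numActiveOne (f : Bool → Bool → Bool → Bool) : ℕ :=
  (f true false false).toNat + (f false true false).toNat + (f false false true).toNat

def numActiveTwo (f : Bool → Bool → Bool → Bool) : ℕ :=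
  (f true true false).toNat + (f true false true).toNat + (f false true true).toNat

theorem numActiveOne_le (f : Bool → Bool → Bool → Bool) : numActiveOne f ≤ 3 := by
  unfold numActiveOne
  linarith [Bool.toNat_le (f true false false), Bool.toNat_le (f false true false),
    Bool.toNat_le (f false false true)]

theorem numActiveTwo_le (f : Bool → Bool → Bool → Bool) : numActiveTwo f ≤ 3 := by
  unfold numActiveTwo
  linarith [Bool.toNat_le (f true true false), Bool.toNat_le (f true false true),
    Bool.toNat_le (f false true true)]

theorem ite_eq_toNat_mul (b : Bool) (p : ℝ) : (if b = true then p else 0) = b.toNat * p := by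
  cases b <;> simp

theorem mfSum_eq_oddMeanField {f : Bool → Bool → Bool → Bool} (hf : f false false false = true)
    (a : ℝ) :
    mfSum f a = oddMeanField (numActiveOne f) (numActiveTwo f) (f true true true).toNat a := by
  simp only [mfSum, Fintype.sum_prod_type, Fintype.sum_bool, ite_eq_toNat_mul, hf, bitR,
    oddMeanField, numActiveOne, numActiveTwo, Bool.toNat_true, Bool.toNat_false]
  push_cast
  ring

theorem stmt9 (f : Bool → Bool → Bool → Bool) (hf : f false false false = true)
    (l : ℝ) (hl : l ∈ Set.Ioo (0:ℝ) 1) :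
    ∃! a : ℝ, a ∈ Set.Icc (0:ℝ) 1 ∧ a = l * mfSum f a := by
  simp only [mfSum_eq_oddMeanField hf]
  exact existsUnique_eq_mul_oddMeanField (numActiveOne_le f) (numActiveTwo_le f)
    (Bool.toNat_le _) hl
end

section
/- Let f : {0,1}³ → {0,1} be an elementary cellular automaton local rule with f(0,0,0) = 0, and set c₇ = f(1,1,1), S₂ = f(1,1,0)+f(1,0,1)+f(0,1,1), S₁ = f(1,0,0)+f(0,1,0)+f(0,0,1). Suppose c₇ − S₂ + S₁ = 0 and 2S₁ > S₂. Then for λ ∈ (0, 1/S₁] the set of solutions in [0,1] of the mean-field fixed-point equation is {0}, while for λ ∈ (1/S₁, 1) it is exactly {0, (λS₁−1)/(λ(2S₁−S₂))}, and in the latter case the nonzero solution lies in (0,1]. -/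
/-!
Expanding the sum by the number of ones in the neighbourhood gives
`mfSum f a = c₀(1-a)³ + S₁a(1-a)² + S₂a²(1-a) + c₇a³`. With `c₀ = 0` and `c₇ - S₂ + S₁ = 0`
the cubic terms cancel, leaving `S₁a - (2S₁ - S₂)a²`, so the fixed-point equation factors as
`a · (λ(2S₁ - S₂)a - (λS₁ - 1)) = 0`. The nonzero root `(λS₁ - 1)/(λ(2S₁ - S₂))` is `≤ 0` when
`λS₁ ≤ 1`; otherwise it is positive, and it is at most `1` because
`λS₁ - 1 ≤ λ(2S₁ - S₂)` amounts to `λc₇ ≤ 1`.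
-/

open Set

/-- `c₇ = f(1,1,1)`. -/
def digit7 (f : Bool → Bool → Bool → Bool) : ℕ := (f true true true).toNat

/-- `S₂ = f(1,1,0)+f(1,0,1)+f(0,1,1)`. -/
def sum2 (f : Bool → Bool → Bool → Bool) : ℕ :=
  (f true true false).toNat + (f true false true).toNat + (f false true true).toNat

/-- `S₁ = f(1,0,0)+f(0,1,0)+f(0,0,1)`. -/
def sum1 (f : Bool → Bool → Bool → Bool) : ℕ :=
  (f true false false).toNat + (f false true false).toNat + (f false false true).toNat

lemma ite_eq_true_eq_toNat_mul (b : Bool) (x : ℝ) :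
    (if b = true then x else 0) = (b.toNat : ℝ) * x := by
  cases b <;> simp

lemma mfSum_eq (f : Bool → Bool → Bool → Bool) (a : ℝ) :
    mfSum f a = ((f false false false).toNat : ℝ) * (1 - a) ^ 3 + (sum1 f : ℝ) * a * (1 - a) ^ 2
      + (sum2 f : ℝ) * a ^ 2 * (1 - a) + (digit7 f : ℝ) * a ^ 3 := by
  simp only [mfSum, Fintype.sum_prod_type, Fintype.sum_bool, ite_eq_true_eq_toNat_mul, bitR,
    Bool.toNat_false, Bool.toNat_true, Nat.cast_zero, Nat.cast_one]
  simp only [sum1, sum2, digit7, Nat.cast_add]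
  ring

lemma mfSum_eq_of_cubic_coeff_eq_zero (f : Bool → Bool → Bool → Bool)
    (hf : f false false false = false)
    (hc : (digit7 f : ℤ) - (sum2 f : ℤ) + (sum1 f : ℤ) = 0) (a : ℝ) :
    mfSum f a = (sum1 f : ℝ) * a - (2 * (sum1 f : ℝ) - (sum2 f : ℝ)) * a ^ 2 := by
  have hc' : (digit7 f : ℝ) - (sum2 f : ℝ) + (sum1 f : ℝ) = 0 := by exact_mod_cast hc
  rw [mfSum_eq, hf, Bool.toNat_false, Nat.cast_zero]
  linear_combination a ^ 3 * hc'

lemma digit7_le_one (f : Bool → Bool → Bool → Bool) : digit7 f ≤ 1 :=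
  Bool.toNat_le _

lemma eq_mul_sub_mul_sq_iff {l s d : ℝ} (hl : l ≠ 0) (hd : d ≠ 0) (a : ℝ) :
    a = l * (s * a - d * a ^ 2) ↔ a = 0 ∨ a = (l * s - 1) / (l * d) := by
  have hfactor : a = l * (s * a - d * a ^ 2) ↔ a * (a * (l * d) - (l * s - 1)) = 0 := by
    constructor <;> intro h <;> linear_combination h
  rw [hfactor, mul_eq_zero, sub_eq_zero, eq_div_iff (mul_ne_zero hl hd)]

lemma setOf_mem_Icc_and_eq_zero_or_eq_of_nonpos {r : ℝ} (hr : r ≤ 0) :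
    {a : ℝ | a ∈ Icc 0 1 ∧ (a = 0 ∨ a = r)} = {0} := by
  ext a
  simp only [mem_ofPred_eq, mem_Icc, mem_singleton_iff]
  constructor
  · rintro ⟨⟨ha0, -⟩, rfl | rfl⟩ <;> linarith
  · rintro rfl
    exact ⟨⟨le_rfl, zero_le_one⟩, Or.inl rfl⟩

lemma setOf_mem_Icc_and_eq_zero_or_eq_of_mem {r : ℝ} (hr : r ∈ Icc (0 : ℝ) 1) :
    {a : ℝ | a ∈ Icc 0 1 ∧ (a = 0 ∨ a = r)} = {0, r} := by
  ext a
  simp only [mem_ofPred_eq, mem_insert_iff, mem_singleton_iff]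
  constructor
  · exact fun h ↦ h.2
  · rintro (rfl | rfl)
    · exact ⟨⟨le_rfl, zero_le_one⟩, Or.inl rfl⟩
    · exact ⟨hr, Or.inr rfl⟩

lemma mul_sub_one_div_mul_mem_Ioc {l s d : ℝ} (hl : 0 < l) (hd : 0 < d) (hls : 1 < l * s)
    (hlsd : l * (s - d) ≤ 1) : (l * s - 1) / (l * d) ∈ Ioc 0 1 :=
  ⟨div_pos (by linarith) (mul_pos hl hd), (div_le_one (mul_pos hl hd)).2 (by linarith)⟩

theorem stmt11 (f : Bool → Bool → Bool → Bool) (hf : f false false false = false)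
    (hc : (digit7 f : ℤ) - (sum2 f : ℤ) + (sum1 f : ℤ) = 0)
    (hS : 2 * sum1 f > sum2 f)
    (l : ℝ) (hl : l ∈ Set.Ioo (0:ℝ) 1) :
    (l ≤ 1 / (sum1 f : ℝ) →
      {a : ℝ | a ∈ Set.Icc (0:ℝ) 1 ∧ a = l * mfSum f a} = {0}) ∧
    (1 / (sum1 f : ℝ) < l →
      {a : ℝ | a ∈ Set.Icc (0:ℝ) 1 ∧ a = l * mfSum f a}
          = {0, (l * (sum1 f : ℝ) - 1) / (l * (2 * (sum1 f : ℝ) - (sum2 f : ℝ)))} ∧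
        (l * (sum1 f : ℝ) - 1) / (l * (2 * (sum1 f : ℝ) - (sum2 f : ℝ))) ∈ Set.Ioc (0:ℝ) 1) := by
  obtain ⟨hl0, hl1⟩ := hl
  have hS1 : (0 : ℝ) < sum1 f := by exact_mod_cast (by omega : 0 < sum1 f)
  have hD : (0 : ℝ) < 2 * sum1 f - sum2 f := by
    have : (sum2 f : ℝ) < 2 * sum1 f := by exact_mod_cast hS
    linarith
  have hc' : (sum1 f : ℝ) - (2 * sum1 f - sum2 f) = digit7 f := by
    have : ((digit7 f : ℤ) : ℝ) - (sum2 f : ℤ) + (sum1 f : ℤ) = 0 := by exact_mod_cast hc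
    push_cast at this
    linarith
  have hc7 : (digit7 f : ℝ) ≤ 1 := by exact_mod_cast digit7_le_one f
  have hset : {a : ℝ | a ∈ Icc 0 1 ∧ a = l * mfSum f a} = {a | a ∈ Icc 0 1 ∧
      (a = 0 ∨ a = (l * sum1 f - 1) / (l * (2 * sum1 f - sum2 f)))} := by
    simp only [mfSum_eq_of_cubic_coeff_eq_zero f hf hc, eq_mul_sub_mul_sq_iff hl0.ne' hD.ne']
  rw [hset]
  refine ⟨fun hle ↦ setOf_mem_Icc_and_eq_zero_or_eq_of_nonpos ?_, fun hlt ↦ ?_⟩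
  · rw [le_div_iff₀ hS1] at hle
    exact div_nonpos_of_nonpos_of_nonneg (by linarith) (mul_pos hl0 hD).le
  · rw [div_lt_iff₀ hS1] at hlt
    have hroot := mul_sub_one_div_mul_mem_Ioc hl0 hD hlt (by rw [hc']; nlinarith)
    exact ⟨setOf_mem_Icc_and_eq_zero_or_eq_of_mem (Ioc_subset_Icc_self hroot), hroot⟩
end

section
/- Let f : {0,1}³ → {0,1} be the rule of ECA 254, i.e. f(z₁,z₂,z₃) = 0 if (z₁,z₂,z₃) = (0,0,0) and f(z₁,z₂,z₃) = 1 otherwise (the percolation PCA). Then the set of solutions in [0,1] of the mean-field fixed-point equation a = λ·(a³ − 3a² + 3a) is {0} for λ ∈ (0, 1/3], and is exactly {0, 3/2 − √(1/λ − 3/4)} for λ ∈ (1/3, 1), with the nonzero solution lying in (0,1). -/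
/-! Writing `s = √(1/λ - 3/4)`, the identity `λ s² = 1 - 3λ/4` factors the fixed-point equation as
`λ a (a - (3/2 - s)) (a - (3/2 + s)) = 0`. The root `3/2 + s` always exceeds `1`, and `3/2 - s`
lies in `(0, 1)` exactly when `1/2 < s < 3/2`, i.e. when `1/3 < λ < 1`. -/

namespace ECA254

theorem mul_cubic_sub_self {l s : ℝ} (hs : l * s ^ 2 = 1 - 3 / 4 * l) (a : ℝ) :
    l * (a ^ 3 - 3 * a ^ 2 + 3 * a) - a = l * a * ((a - (3 / 2 - s)) * (a - (3 / 2 + s))) := by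
  linear_combination a * hs

theorem eq_mul_cubic_iff {l s : ℝ} (hl : l ≠ 0) (hs : l * s ^ 2 = 1 - 3 / 4 * l) (a : ℝ) :
    a = l * (a ^ 3 - 3 * a ^ 2 + 3 * a) ↔ a = 0 ∨ a = 3 / 2 - s ∨ a = 3 / 2 + s := by
  rw [← sub_eq_zero, ← neg_eq_zero, neg_sub, mul_cubic_sub_self hs]
  simp only [mul_eq_zero, hl, false_or, sub_eq_zero]

theorem mul_sqrt_inv_sub_sq {l : ℝ} (hl0 : 0 < l) (hl : l ≤ 4 / 3) :
    l * Real.sqrt (1 / l - 3 / 4) ^ 2 = 1 - 3 / 4 * l := by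
  have hinv : 3 / 4 ≤ 1 / l := by rw [le_div_iff₀ hl0]; linarith
  rw [Real.sq_sqrt (by linarith)]
  field_simp

theorem setOf_fixedPoint_Icc_eq {l s : ℝ} (hl : l ≠ 0) (hs : l * s ^ 2 = 1 - 3 / 4 * l) (hs0 : 0 ≤ s) :
    {a : ℝ | a ∈ Set.Icc (0:ℝ) 1 ∧ a = l * (a ^ 3 - 3 * a ^ 2 + 3 * a)}
      = {a : ℝ | a ∈ Set.Icc (0:ℝ) 1 ∧ (a = 0 ∨ a = 3 / 2 - s)} := by
  ext a
  simp only [Set.mem_ofPred_eq, eq_mul_cubic_iff hl hs]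
  constructor
  · rintro ⟨ha, h | h | h⟩
    · exact ⟨ha, .inl h⟩
    · exact ⟨ha, .inr h⟩
    · linarith [ha.2]
  · rintro ⟨ha, h | h⟩
    · exact ⟨ha, .inl h⟩
    · exact ⟨ha, .inr (.inl h)⟩

end ECA254

open ECA254 in
theorem stmt13_general
    (l : ℝ) (hl : l ∈ Set.Ioo (0:ℝ) 1) :
    (l ≤ 1/3 →
      {a : ℝ | a ∈ Set.Icc (0:ℝ) 1 ∧ a = l * (a^3 - 3*a^2 + 3*a)} = {0}) ∧
    (1/3 < l →
      {a : ℝ | a ∈ Set.Icc (0:ℝ) 1 ∧ a = l * (a^3 - 3*a^2 + 3*a)}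
          = {0, 3/2 - Real.sqrt (1/l - 3/4)} ∧
        (3/2 - Real.sqrt (1/l - 3/4)) ∈ Set.Ioo (0:ℝ) 1) := by
  obtain ⟨hl0, hl1⟩ := hl
  set s := Real.sqrt (1 / l - 3 / 4)
  have hs : l * s ^ 2 = 1 - 3 / 4 * l := mul_sqrt_inv_sub_sq hl0 (by linarith)
  have hs0 : 0 ≤ s := Real.sqrt_nonneg _
  rw [setOf_fixedPoint_Icc_eq hl0.ne' hs hs0]
  refine ⟨fun hle => ?_, fun hgt => ?_⟩
  · have hs32 : 3 / 2 ≤ s := by nlinarith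
    ext a
    simp only [Set.mem_ofPred_eq, Set.mem_Icc, Set.mem_singleton_iff]
    constructor
    · rintro ⟨ha, h | h⟩ <;> linarith
    · rintro rfl
      norm_num
  · have hs32 : s < 3 / 2 := by nlinarith
    have hs12 : 1 / 2 < s := by nlinarith
    refine ⟨?_, by constructor <;> linarith⟩
    ext a
    simp only [Set.mem_ofPred_eq, Set.mem_Icc, Set.mem_insert_iff, Set.mem_singleton_iff]
    constructor
    · exact fun h => h.2
    · rintro (rfl | rfl)
      · norm_num
      · exact ⟨⟨by linarith, by linarith⟩, .inr rfl⟩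

theorem stmt13 (f : Bool → Bool → Bool → Bool)
    (hf : ∀ z₁ z₂ z₃, f z₁ z₂ z₃ = (z₁ || z₂ || z₃))
    (l : ℝ) (hl : l ∈ Set.Ioo (0:ℝ) 1) :
    (l ≤ 1/3 →
      {a : ℝ | a ∈ Set.Icc (0:ℝ) 1 ∧ a = l * (a^3 - 3*a^2 + 3*a)} = {0}) ∧
    (1/3 < l →
      {a : ℝ | a ∈ Set.Icc (0:ℝ) 1 ∧ a = l * (a^3 - 3*a^2 + 3*a)}
          = {0, 3/2 - Real.sqrt (1/l - 3/4)} ∧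
        (3/2 - Real.sqrt (1/l - 3/4)) ∈ Set.Ioo (0:ℝ) 1) :=
  stmt13_general l hl
end

section
/- Let f : {0,1}³ → {0,1} be the majority rule (ECA 232), i.e. f(z₁,z₂,z₃) = 1 exactly when z₁ + z₂ + z₃ ≥ 2. Then the set of solutions in [0,1] of the mean-field fixed-point equation a = λ·(3a² − 2a³) is: {0} for λ ∈ (0, 8/9); {0, 3/4} for λ = 8/9; and exactly {0, 3/4 − √(9/16 − 1/(2λ)), 3/4 + √(9/16 − 1/(2λ))} for λ ∈ (8/9, 1), with both nonzero solutions lying in (0,1). In particular the largest nonzero solution does not tend to 0 as λ decreases to 8/9 (discontinuous transition). -/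
/-!
Dividing out the trivial root, a nonzero fixed point of `a ↦ λ(3a² − 2a³)` solves
`2λa² − 3λa + 1 = 0`, i.e. `(a − 3/4)² = 9/16 − 1/(2λ)`. The right-hand side is negative,
zero or positive according as `λ < 8/9`, `λ = 8/9` or `λ > 8/9`, and for `λ < 1` it is below
`1/16`, so both roots `3/4 ± √(9/16 − 1/(2λ))` lie in `(0, 1)`. The larger root is at least `3/4`,
which is why it cannot tend to `0` as `λ ↓ 8/9`.
-/

open Set Filter Topology

namespace Majority

def fixedPoints (l : ℝ) : Set ℝ := {a | a ∈ Icc 0 1 ∧ a = l * (3*a^2 - 2*a^3)}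

theorem fixedPoint_equation_iff {l a : ℝ} (hl : l ≠ 0) :
    a = l * (3*a^2 - 2*a^3) ↔ a = 0 ∨ (a - 3/4)^2 = 9/16 - 1/(2*l) := by
  have hfactor : a - l * (3*a^2 - 2*a^3) = 2 * l * a * ((a - 3/4)^2 - (9/16 - 1/(2*l))) := by
    field_simp
    ring
  rw [← sub_eq_zero, hfactor]
  simp [hl, sub_eq_zero]

theorem fixedPoints_of_lt {l : ℝ} (h0 : 0 < l) (hl : l < 8/9) : fixedPoints l = {0} := by
  have hneg : 9/16 - 1/(2*l) < 0 := by
    rw [sub_neg, lt_div_iff₀ (by positivity)]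
    linarith
  ext a
  simp only [fixedPoints, mem_ofPred_eq, fixedPoint_equation_iff h0.ne', mem_singleton_iff]
  constructor
  · rintro ⟨-, rfl | hsq⟩
    · rfl
    · nlinarith [sq_nonneg (a - 3/4)]
  · rintro rfl
    simp

theorem fixedPoints_eight_ninths : fixedPoints (8/9) = {0, 3/4} := by
  ext a
  simp only [fixedPoints, mem_ofPred_eq, fixedPoint_equation_iff (by norm_num : (8/9 : ℝ) ≠ 0),
    mem_insert_iff, mem_singleton_iff]
  constructor
  · rintro ⟨-, h | h⟩
    · exact Or.inl h
    · exact Or.inr (by nlinarith [sq_nonneg (a - 3/4)])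
  · rintro (rfl | rfl) <;> norm_num

theorem sqrt_pos_of_gt {l : ℝ} (hl : 8/9 < l) : 0 < √(9/16 - 1/(2*l)) := by
  rw [Real.sqrt_pos, sub_pos, div_lt_iff₀ (by positivity)]
  linarith

theorem sqrt_lt_of_lt_one {l : ℝ} (h0 : 0 < l) (hl : l < 1) : √(9/16 - 1/(2*l)) < 1/4 := by
  rw [Real.sqrt_lt' (by norm_num), sub_lt_comm, lt_div_iff₀ (by positivity)]
  linarith

theorem fixedPoints_of_gt {l : ℝ} (hl : 8/9 < l) (hl1 : l < 1) :
    fixedPoints l = {0, 3/4 - √(9/16 - 1/(2*l)), 3/4 + √(9/16 - 1/(2*l))} := by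
  set s := √(9/16 - 1/(2*l))
  have hs0 : 0 < s := sqrt_pos_of_gt hl
  have hs1 : s < 1/4 := sqrt_lt_of_lt_one (by linarith) hl1
  have hsq : 9/16 - 1/(2*l) = s^2 := (Real.sq_sqrt (Real.sqrt_pos.mp hs0).le).symm
  ext a
  simp only [fixedPoints, mem_ofPred_eq, fixedPoint_equation_iff (by linarith : l ≠ 0), hsq,
    sq_eq_sq_iff_eq_or_eq_neg, mem_insert_iff, mem_singleton_iff, mem_Icc]
  constructor
  · rintro ⟨-, h | h | h⟩
    · exact Or.inl h
    · exact Or.inr (Or.inr (by linarith))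
    · exact Or.inr (Or.inl (by linarith))
  · rintro (rfl | rfl | rfl)
    · simp
    · exact ⟨⟨by linarith, by linarith⟩, Or.inr (Or.inr (by ring))⟩
    · exact ⟨⟨by linarith, by linarith⟩, Or.inr (Or.inl (by ring))⟩

end Majority

open Majority in
theorem stmt15_general :
    (∀ l ∈ Set.Ioo (0:ℝ) 1,
      (l < 8/9 →
        {a : ℝ | a ∈ Set.Icc (0:ℝ) 1 ∧ a = l * (3*a^2 - 2*a^3)} = {0}) ∧
      (l = 8/9 →
        {a : ℝ | a ∈ Set.Icc (0:ℝ) 1 ∧ a = l * (3*a^2 - 2*a^3)} = {0, 3/4}) ∧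
      (8/9 < l →
        {a : ℝ | a ∈ Set.Icc (0:ℝ) 1 ∧ a = l * (3*a^2 - 2*a^3)}
            = {0, 3/4 - Real.sqrt (9/16 - 1/(2*l)), 3/4 + Real.sqrt (9/16 - 1/(2*l))} ∧
          (3/4 - Real.sqrt (9/16 - 1/(2*l))) ∈ Set.Ioo (0:ℝ) 1 ∧
          (3/4 + Real.sqrt (9/16 - 1/(2*l))) ∈ Set.Ioo (0:ℝ) 1)) ∧
    ¬ Filter.Tendsto (fun l : ℝ => 3/4 + Real.sqrt (9/16 - 1/(2*l)))
        (nhdsWithin (8/9) (Set.Ioi (8/9))) (nhds 0) := by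
  refine ⟨fun l ⟨hl0, hl1⟩ => ⟨fixedPoints_of_lt hl0, ?_, fun hl => ?_⟩, fun h => ?_⟩
  · rintro rfl
    exact fixedPoints_eight_ninths
  · have hs0 := sqrt_pos_of_gt hl
    have hs1 := sqrt_lt_of_lt_one hl0 hl1
    exact ⟨fixedPoints_of_gt hl hl1, ⟨by linarith, by linarith⟩, ⟨by linarith, by linarith⟩⟩
  · have h34 : (3/4 : ℝ) ≤ 0 :=
      ge_of_tendsto' h fun l => le_add_of_nonneg_right (Real.sqrt_nonneg _)
    norm_num at h34

theorem stmt15 (f : Bool → Bool → Bool → Bool)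
    (hf : ∀ z₁ z₂ z₃, f z₁ z₂ z₃ = decide (2 ≤ z₁.toNat + z₂.toNat + z₃.toNat)) :
    (∀ l ∈ Set.Ioo (0:ℝ) 1,
      (l < 8/9 →
        {a : ℝ | a ∈ Set.Icc (0:ℝ) 1 ∧ a = l * (3*a^2 - 2*a^3)} = {0}) ∧
      (l = 8/9 →
        {a : ℝ | a ∈ Set.Icc (0:ℝ) 1 ∧ a = l * (3*a^2 - 2*a^3)} = {0, 3/4}) ∧
      (8/9 < l →
        {a : ℝ | a ∈ Set.Icc (0:ℝ) 1 ∧ a = l * (3*a^2 - 2*a^3)}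
            = {0, 3/4 - Real.sqrt (9/16 - 1/(2*l)), 3/4 + Real.sqrt (9/16 - 1/(2*l))} ∧
          (3/4 - Real.sqrt (9/16 - 1/(2*l))) ∈ Set.Ioo (0:ℝ) 1 ∧
          (3/4 + Real.sqrt (9/16 - 1/(2*l))) ∈ Set.Ioo (0:ℝ) 1)) ∧
    ¬ Filter.Tendsto (fun l : ℝ => 3/4 + Real.sqrt (9/16 - 1/(2*l)))
        (nhdsWithin (8/9) (Set.Ioi (8/9))) (nhds 0) :=
  stmt15_general
end
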